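/- arXiv:2205.13168 — 6 statements merged into one kernel-verified Lean document; each statement's English description precedes it below -/
import Mathlib

section
/- Let m, n, k, x be positive integers with m ≥ 3, k ≥ 3 and x ≥ 2. If (F_{m+1}^{(k)})^x − (F_{m-1}^{(k)})^x = F_n^{(k)}, then (m−2)x + 2 < n < mx + 2. -/
/-- If `m ≥ 3`, `k ≥ 3`, `x ≥ 2` and `(F_{m+1}^{(k)})^x − (F_{m-1}^{(k)})^x = F_n^{(k)}`,
then `(m−2)x + 2 < n < mx + 2`. -/
theorem kFib_power_diff_index_bounds
    (k : ℕ) (m n : ℤ) (x : ℕ)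
    (hm : 3 ≤ m) (hn : 0 < n) (hx : 2 ≤ x) (hk : 3 ≤ k)
    (F : ℤ → ℤ)
    (hF0 : ∀ i : ℤ, 2 - (k : ℤ) ≤ i → i ≤ 0 → F i = 0)
    (hF1 : F 1 = 1)
    (hFrec : ∀ i : ℤ, 2 ≤ i → F i = ∑ j ∈ Finset.Icc (1 : ℤ) (k : ℤ), F (i - j))
    (heq : (F (m + 1)) ^ x - (F (m - 1)) ^ x = F n) :
    (m - 2) * (x : ℤ) + 2 < n ∧ n < m * (x : ℤ) + 2 := by
  have hk2 : (3:ℤ) ≤ (k:ℤ) := by exact_mod_cast hk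
  -- nonnegativity
  have L0 : ∀ t : ℕ, ∀ i : ℤ, 2 - (k:ℤ) ≤ i → i ≤ 2 - (k:ℤ) + t → 0 ≤ F i := by
    intro t
    induction t with
    | zero =>
      intro i h1 h2
      rw [hF0 i h1 (by omega)]
    | succ t ih =>
      intro i h1 h2
      by_cases hle : i ≤ 2 - (k:ℤ) + t
      · exact ih i h1 hle
      · rcases lt_or_ge i 1 with hi0 | hi1
        · rw [hF0 i h1 (by omega)]
        · rcases lt_or_ge i 2 with hi | hi
          · have : i = 1 := by omega
            rw [this, hF1]; norm_num
          · rw [hFrec i hi]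
            apply Finset.sum_nonneg
            intro j hj
            simp only [Finset.mem_Icc] at hj
            exact ih (i - j) (by omega) (by omega)
  have FN : ∀ i : ℤ, 2 - (k:ℤ) ≤ i → 0 ≤ F i := by
    intro i h
    exact L0 (i - (2 - (k:ℤ))).toNat i h (by omega)
  -- F 2 = 1
  have F2 : F 2 = 1 := by
    rw [hFrec 2 le_rfl]
    rw [Finset.sum_eq_single_of_mem 1 (by simp only [Finset.mem_Icc]; omega)
      (fun j hj hne => by
        simp only [Finset.mem_Icc] at hj
        exact hF0 (2 - j) (by omega) (by omega))]
    norm_num [hF1]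
  -- F i ≥ F (i-1) + F (i-2)
  have L5 : ∀ i : ℤ, 2 ≤ i → F (i-1) + F (i-2) ≤ F i := by
    intro i hi
    rw [hFrec i hi]
    have hsub : ({1, 2} : Finset ℤ) ⊆ Finset.Icc 1 (k:ℤ) := by
      intro j hj
      simp only [Finset.mem_insert, Finset.mem_singleton] at hj
      simp only [Finset.mem_Icc]
      rcases hj with h | h <;> omega
    have hs := Finset.sum_le_sum_of_subset_of_nonneg hsub
      (fun j hj _ => FN (i - j) (by simp only [Finset.mem_Icc] at hj; omega))
    calc F (i-1) + F (i-2) = ∑ j ∈ ({1,2} : Finset ℤ), F (i - j) := by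
          rw [Finset.sum_pair (by norm_num)]
        _ ≤ _ := hs
  -- one-step monotonicity
  have L2 : ∀ i : ℤ, 2 ≤ i → F (i-1) ≤ F i := by
    intro i hi
    have h1 := L5 i hi
    have h2 := FN (i-2) (by omega)
    linarith
  -- positivity
  have L1 : ∀ t : ℕ, 1 ≤ F (1 + t) := by
    intro t
    induction t with
    | zero => simpa using hF1.ge
    | succ t ih =>
      have := L2 (1 + (t:ℤ) + 1) (by omega)
      have e : (1 + ((t:ℤ) + 1)) = (1 + (t:ℤ) + 1) := by ring
      push_cast
      rw [e]
      have e2 : (1 + (t:ℤ) + 1) - 1 = 1 + (t:ℤ) := by ring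
      rw [e2] at this
      linarith
  have Fpos : ∀ i : ℤ, 1 ≤ i → 1 ≤ F i := by
    intro i hi
    have := L1 (i - 1).toNat
    have e : (1 : ℤ) + (i-1).toNat = i := by omega
    rwa [e] at this
  -- monotonicity
  have Fmono : ∀ i j : ℤ, 1 ≤ i → i ≤ j → F i ≤ F j := by
    intro i j hi hij
    have key : ∀ t : ℕ, F i ≤ F (i + t) := by
      intro t
      induction t with
      | zero => simp
      | succ t ih =>
        have := L2 (i + (t:ℤ) + 1) (by omega)
        have e2 : (i + (t:ℤ) + 1) - 1 = i + (t:ℤ) := by ring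
        rw [e2] at this
        push_cast
        have e : i + ((t:ℤ) + 1) = i + (t:ℤ) + 1 := by ring
        rw [e]
        linarith
    have := key (j - i).toNat
    have e : i + ((j - i).toNat : ℤ) = j := by omega
    rwa [e] at this
  -- reflection of sums
  have Srefl : ∀ (s c d : ℤ), ∑ j ∈ Finset.Icc c d, F (s - j)
      = ∑ t ∈ Finset.Icc (s - d) (s - c), F t := by
    intro s c d
    apply Finset.sum_nbij' (fun j => s - j) (fun t => s - t)
    · intro a ha; simp only [Finset.mem_Icc] at *; omega
    · intro a ha; simp only [Finset.mem_Icc] at *; omega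
    · intro a _; ring
    · intro a _; ring
    · intro a _; rfl
  -- Claim A : F a * F (b+1) ≤ F (a+b)
  have CA : ∀ t : ℕ, ∀ b : ℤ, 1 ≤ b → b ≤ 1 + t → ∀ a : ℤ, 1 ≤ a →
      F a * F (b+1) ≤ F (a + b) := by
    intro t
    induction t with
    | zero =>
      intro b hb1 hb2 a ha
      have hb : b = 1 := by omega
      subst hb
      norm_num [F2]
      have := L2 (a+1) (by omega)
      have e : (a+1) - 1 = a := by ring
      rwa [e] at this
    | succ t ih =>
      intro b hb1 hb2 a ha
      by_cases h : b ≤ 1 + t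
      · exact ih b hb1 h a ha
      · have hb : (2:ℤ) ≤ b := by omega
        rw [hFrec (a+b) (by omega), hFrec (b+1) (by omega), Finset.mul_sum]
        apply Finset.sum_le_sum
        intro j hj
        simp only [Finset.mem_Icc] at hj
        rcases lt_trichotomy (b - j) 0 with hlt | heq0 | hgt
        · rw [hF0 (b + 1 - j) (by omega) (by omega), mul_zero]
          exact FN (a + b - j) (by omega)
        · have e1 : b + 1 - j = 1 := by omega
          have e2 : a + b - j = a := by omega
          rw [e1, e2, hF1, mul_one]
        · have h1 : 1 ≤ b - j := by omega
          have := ih (b - j) h1 (by omega) a ha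
          have e1 : b + 1 - j = (b - j) + 1 := by ring
          have e2 : a + b - j = a + (b - j) := by ring
          rw [e1, e2]
          exact this
  -- Claim B : F (a+b) ≤ F (a+2) * F b
  have CB : ∀ t : ℕ, ∀ b : ℤ, 1 ≤ b → b ≤ 1 + t → ∀ a : ℤ, 1 ≤ a →
      F (a + b) ≤ F (a + 2) * F b := by
    intro t
    induction t with
    | zero =>
      intro b hb1 hb2 a ha
      have hb : b = 1 := by omega
      subst hb
      rw [hF1, mul_one]
      have := L2 (a+2) (by omega)
      have e : (a+2) - 1 = a + 1 := by ring
      rw [e] at this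
      exact this
    | succ t ih =>
      intro b hb1 hb2 a ha
      by_cases h : b ≤ 1 + t
      · exact ih b hb1 h a ha
      · by_cases hb2c : b = 2
        · subst hb2c
          rw [F2, mul_one]
        · have hb3 : (3:ℤ) ≤ b := by omega
          rw [hFrec (a+b) (by omega), hFrec b (by omega), Finset.mul_sum]
          by_cases hcase : (k:ℤ) ≤ b - 2
          · apply Finset.sum_le_sum
            intro j hj
            simp only [Finset.mem_Icc] at hj
            have := ih (b - j) (by omega) (by omega) a ha
            have e2 : a + b - j = a + (b - j) := by ring
            rw [e2]
            exact this
          · have hsplit : Finset.Icc (1:ℤ) (k:ℤ)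
                = Finset.Icc 1 (b-2) ∪ Finset.Icc (b-1) (k:ℤ) := by
              ext j
              simp only [Finset.mem_Icc, Finset.mem_union]
              omega
            have hdisj : Disjoint (Finset.Icc (1:ℤ) (b-2)) (Finset.Icc (b-1) (k:ℤ)) := by
              rw [Finset.disjoint_left]
              intro j hj hj'
              simp only [Finset.mem_Icc] at hj hj'
              omega
            rw [hsplit, Finset.sum_union hdisj, Finset.sum_union hdisj]
            apply add_le_add
            · apply Finset.sum_le_sum
              intro j hj
              simp only [Finset.mem_Icc] at hj
              have := ih (b - j) (by omega) (by omega) a ha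
              have e2 : a + b - j = a + (b - j) := by ring
              rw [e2]
              exact this
            · have hR : ∑ j ∈ Finset.Icc (b-1) (k:ℤ), F (a+2) * F (b - j) = F (a+2) := by
                rw [Finset.sum_eq_single_of_mem (b-1)
                  (by simp only [Finset.mem_Icc]; omega)
                  (fun j hj hne => by
                    simp only [Finset.mem_Icc] at hj
                    rw [hF0 (b - j) (by omega) (by omega), mul_zero])]
                rw [show b - (b-1) = 1 by ring, hF1, mul_one]
              rw [hR]
              have hL : ∑ j ∈ Finset.Icc (b-1) (k:ℤ), F (a + b - j)
                  = ∑ s ∈ Finset.Icc (a + b - k) (a + 1), F s := by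
                rw [Srefl (a+b) (b-1) (k:ℤ)]
                congr 1
                ring
              rw [hL]
              have hA2 : F (a + 2) = ∑ s ∈ Finset.Icc (a + 2 - k) (a + 1), F s := by
                rw [hFrec (a+2) (by omega), Srefl (a+2) 1 (k:ℤ)]
                congr 1 <;> ring
              rw [hA2]
              apply Finset.sum_le_sum_of_subset_of_nonneg
              · intro s hs
                simp only [Finset.mem_Icc] at *
                omega
              · intro s hs _
                exact FN s (by simp only [Finset.mem_Icc] at hs; omega)
  -- power bounds
  have PA : ∀ y : ℕ, F (m+1) ^ y ≤ F (m * (y:ℤ) + 2) := by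
    intro y
    induction y with
    | zero => simp [F2]
    | succ y ih =>
      have hca := CA (m - 1).toNat m (by omega) (by omega) (m * (y:ℤ) + 2) (by nlinarith)
      have hA0 : 0 ≤ F (m+1) := FN (m+1) (by omega)
      have e : m * ((y:ℕ):ℤ) + 2 + m = m * (((y:ℕ):ℤ) + 1) + 2 := by ring
      calc F (m+1) ^ (y+1) = F (m+1) ^ y * F (m+1) := by ring
        _ ≤ F (m * (y:ℤ) + 2) * F (m+1) := by
            apply mul_le_mul_of_nonneg_right ih hA0
        _ ≤ F (m * (y:ℤ) + 2 + m) := hca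
        _ = F (m * (((y:ℕ):ℤ) + 1) + 2) := by rw [e]
        _ = F (m * ((y+1 : ℕ):ℤ) + 2) := by push_cast; ring_nf
  have PB : ∀ y : ℕ, F ((m-2) * (y:ℤ) + 2) ≤ F m ^ y := by
    intro y
    induction y with
    | zero => simp [F2]
    | succ y ih =>
      have hcb := CB ((m-2) * (y:ℤ) + 1).toNat ((m-2) * (y:ℤ) + 2)
        (by nlinarith) (by omega) (m - 2) (by omega)
      have hC0 : 0 ≤ F m := FN m (by omega)
      have e1 : m - 2 + ((m-2) * ((y:ℕ):ℤ) + 2) = (m-2) * (((y:ℕ):ℤ) + 1) + 2 := by ring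
      have e2 : m - 2 + 2 = m := by ring
      rw [e1, e2] at hcb
      calc F ((m-2) * ((y+1 : ℕ):ℤ) + 2) = F ((m-2) * (((y:ℕ):ℤ) + 1) + 2) := by
            push_cast; ring_nf
        _ ≤ F m * F ((m-2) * (y:ℤ) + 2) := hcb
        _ ≤ F m * F m ^ y := by
            apply mul_le_mul_of_nonneg_left ih hC0
        _ = F m ^ (y+1) := by ring
  -- key values
  set A := F (m+1) with hA
  set B := F (m-1) with hB
  set C := F m with hC
  have hB1 : 1 ≤ B := Fpos (m-1) (by omega)
  have hBC : B ≤ C := Fmono (m-1) m (by omega) (by omega)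
  have hACB : C + B ≤ A := by
    have := L5 (m+1) (by omega)
    have e1 : (m+1) - 1 = m := by ring
    have e2 : (m+1) - 2 = m - 1 := by ring
    rw [e1, e2] at this
    linarith
  -- binomial-type inequality
  have Q : ∀ y : ℕ, 2 ≤ y → C ^ y + 2 * B ^ y ≤ (C + B) ^ y := by
    intro y hy
    induction y with
    | zero => omega
    | succ y ih =>
      by_cases h2 : 2 ≤ y
      · have ihy := ih h2
        have hB0 : (0:ℤ) ≤ B := by linarith
        have hC0 : (0:ℤ) ≤ C := by linarith
        have hBp : (0:ℤ) ≤ B ^ y := pow_nonneg hB0 y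
        have hCp : (0:ℤ) ≤ C ^ y := pow_nonneg hC0 y
        have hCB : (0:ℤ) ≤ C + B := by linarith
        have h1 : (0:ℤ) ≤ C ^ y * B := mul_nonneg hCp hB0
        have h2' : (0:ℤ) ≤ B ^ y * C := mul_nonneg hBp hC0
        calc C ^ (y+1) + 2 * B ^ (y+1)
            ≤ (C ^ y + 2 * B ^ y) * (C + B) := by
              rw [pow_succ, pow_succ]; nlinarith [h1, h2']
          _ ≤ (C + B) ^ y * (C + B) := by
              apply mul_le_mul_of_nonneg_right ihy hCB
          _ = (C + B) ^ (y+1) := by ring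
      · have hy2 : y + 1 = 2 := by omega
        rw [hy2]
        nlinarith
  -- assemble
  have hQx := Q x hx
  have hpow : (C + B) ^ x ≤ A ^ x := pow_le_pow_left₀ (by linarith) hACB x
  have hBx : 1 ≤ B ^ x := one_le_pow₀ hB1
  have hFn_lb : F ((m-2) * (x:ℤ) + 2) < F n := by
    have := PB x
    calc F ((m-2) * (x:ℤ) + 2) ≤ C ^ x := this
      _ < C ^ x + B ^ x := by linarith
      _ ≤ A ^ x - B ^ x := by linarith
      _ = F n := heq
  have hFn_ub : F n < F (m * (x:ℤ) + 2) := by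
    have := PA x
    calc F n = A ^ x - B ^ x := heq.symm
      _ ≤ A ^ x - 1 := by linarith
      _ < A ^ x := by linarith
      _ ≤ F (m * (x:ℤ) + 2) := this
  constructor
  · by_contra hcon
    push_neg at hcon
    have := Fmono n ((m-2) * (x:ℤ) + 2) (by omega) hcon
    linarith
  · by_contra hcon
    push_neg at hcon
    have := Fmono (m * (x:ℤ) + 2) n (by nlinarith) hcon
    linarith
end

section
/- Let k ≥ 2 be an integer and let α be a real number with 1 < α < 2 satisfying α^k = α^{k−1} + α^{k−2} + ⋯ + α + 1. Then for every integer n ≥ 1, α^{n−2} ≤ F_n^{(k)} ≤ α^{n−1}. -/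
/-!
Since `α` is a root of `Ψ_k`, every sequence `n ↦ α ^ (n + c)` satisfies the `k`-bonacci
recurrence, so both bounds propagate by strong induction once they hold on a window of initial
values. For the upper bound these are `F_n = 0` (`n ≤ 0`) and `F_1 = 1`. For the lower bound the
window is `1 ≤ n ≤ k + 1`, where `F_{n+1} = 2 F_n - F_{n-k}` gives
`F_n = 2 ^ (n - 2) ≥ α ^ (n - 2)`.
-/

open Finset

structure IsKBonacci (k : ℕ) (F : ℤ → ℤ) : Prop where
  eq_zero : ∀ i : ℤ, 2 - (k : ℤ) ≤ i → i ≤ 0 → F i = 0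
  one : F 1 = 1
  recurrence : ∀ i : ℤ, 2 ≤ i → F i = ∑ j ∈ Icc (1 : ℤ) k, F (i - j)

theorem sum_Icc_one_eq_sum_range {M : Type*} [AddCommMonoid M] (f : ℤ → M) (k : ℕ) :
    ∑ j ∈ Icc (1 : ℤ) k, f j = ∑ i ∈ range k, f (i + 1) :=
  sum_nbij' (fun j ↦ (j - 1).toNat) (fun i ↦ i + 1) (by simp; omega) (by simp)
    (by simp; omega) (by simp) (by simp; intro j _ _; congr; omega)

theorem zpow_eq_sum_range_zpow_sub {α : ℝ} (hα : α ≠ 0) {k : ℕ}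
    (hroot : α ^ k = ∑ i ∈ range k, α ^ i) (c : ℤ) :
    α ^ c = ∑ i ∈ range k, α ^ (c - 1 - i) := by
  have hsplit : ∀ i ∈ range k, α ^ (c - 1 - i) = α ^ (c - k) * α ^ (k - 1 - i) := by
    intro i hi
    rw [← zpow_natCast, ← zpow_add₀ hα]
    congr 1
    have := mem_range.1 hi
    omega
  rw [sum_congr rfl hsplit, ← mul_sum, sum_range_reflect (fun i ↦ α ^ i) k, ← hroot,
    ← zpow_natCast, ← zpow_add₀ hα, sub_add_cancel]

namespace IsKBonacci

variable {k : ℕ} {F : ℤ → ℤ}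

theorem eq_sum_range (hF : IsKBonacci k F) {n : ℤ} (hn : 2 ≤ n) :
    F n = ∑ i ∈ range k, F (n - 1 - i) := by
  rw [hF.recurrence n hn, sum_Icc_one_eq_sum_range]
  exact sum_congr rfl fun i _ ↦ by rw [sub_add_eq_sub_sub, sub_right_comm]

theorem add_one_eq_two_mul_sub (hF : IsKBonacci k F) {n : ℤ} (hn : 2 ≤ n) :
    F (n + 1) = 2 * F n - F (n - k) := by
  rcases k with _ | l
  · simp [hF.eq_sum_range hn, hF.eq_sum_range (show 2 ≤ n + 1 by omega)]
  have hshift : ∀ i : ℕ, n - ((i + 1 : ℕ) : ℤ) = n - 1 - i := by intro i; push_cast; ring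
  rw [hF.eq_sum_range (by omega), add_sub_cancel_right, sum_range_succ']
  simp only [hshift, Nat.cast_zero, sub_zero]
  rw [hF.eq_sum_range hn, sum_range_succ]
  ring

theorem eq_two_pow (hF : IsKBonacci k F) : ∀ m : ℕ, m < k → F (m + 2) = 2 ^ m
  | 0, hk => by
    rw [Nat.cast_zero, zero_add, hF.eq_sum_range le_rfl, sum_eq_single_of_mem 0 (mem_range.2 hk)]
    · simpa using hF.one
    · intro i hi hi0
      have := mem_range.1 hi
      exact hF.eq_zero _ (by omega) (by omega)
  | m + 1, hm => by
    rw [show ((m + 1 : ℕ) : ℤ) + 2 = (m + 2) + 1 by push_cast; ring,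
      hF.add_one_eq_two_mul_sub (by omega), hF.eq_zero (m + 2 - k) (by omega) (by omega),
      eq_two_pow hF m (by omega)]
    ring

theorem le_zpow_sub_one (hF : IsKBonacci k F) {α : ℝ} (hα : 0 < α)
    (hroot : α ^ k = ∑ i ∈ range k, α ^ i) (n : ℤ) (hn : 2 - k ≤ n) :
    (F n : ℝ) ≤ α ^ (n - 1) := by
  induction n using Int.strongRec (m := 2) with
  | lt n hn2 =>
    rcases (show n = 1 ∨ n ≤ 0 by omega) with rfl | hn0
    · simp [hF.one]
    · rw [hF.eq_zero n hn hn0, Int.cast_zero]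
      positivity
  | ge n hn2 ih =>
    rw [hF.eq_sum_range hn2, zpow_eq_sum_range_zpow_sub hα.ne' hroot, Int.cast_sum]
    refine sum_le_sum fun i hi ↦ ?_
    have := mem_range.1 hi
    rw [sub_right_comm (n - 1) 1]
    exact ih (n - 1 - i) (by omega) (by omega)

theorem zpow_sub_two_le (hF : IsKBonacci k F) {α : ℝ} (hα1 : 1 ≤ α) (hα2 : α ≤ 2)
    (hroot : α ^ k = ∑ i ∈ range k, α ^ i) (n : ℤ) (hn : 1 ≤ n) :
    α ^ (n - 2) ≤ (F n : ℝ) := by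
  induction n using Int.strongRec (m := k + 2) with
  | lt n hnk =>
    rcases (show n = 1 ∨ 2 ≤ n by omega) with rfl | hn2
    · simpa [hF.one] using inv_le_one_of_one_le₀ hα1
    · obtain ⟨m, rfl⟩ : ∃ m : ℕ, n = m + 2 := ⟨(n - 2).toNat, by omega⟩
      rw [hF.eq_two_pow m (by omega), add_sub_cancel_right, zpow_natCast]
      push_cast
      exact pow_le_pow_left₀ (by linarith) hα2 m
  | ge n hnk ih =>
    rw [hF.eq_sum_range (by omega), zpow_eq_sum_range_zpow_sub (by positivity) hroot,
      Int.cast_sum]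
    refine sum_le_sum fun i hi ↦ ?_
    have := mem_range.1 hi
    rw [show n - 2 - 1 - i = n - 1 - i - 2 by ring]
    exact ih (n - 1 - i) (by omega) (by omega)

end IsKBonacci

/-- Bravo–Luca: if `α ∈ (1,2)` satisfies `α^k = α^{k-1} + ⋯ + α + 1`, then for every
integer `n ≥ 1`, `α^{n−2} ≤ F_n^{(k)} ≤ α^{n−1}`. -/
theorem kFib_alpha_pow_bounds
    (k : ℕ) (hk : 2 ≤ k)
    (F : ℤ → ℤ)
    (hF0 : ∀ i : ℤ, 2 - (k : ℤ) ≤ i → i ≤ 0 → F i = 0)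
    (hF1 : F 1 = 1)
    (hFrec : ∀ i : ℤ, 2 ≤ i → F i = ∑ j ∈ Finset.Icc (1 : ℤ) (k : ℤ), F (i - j))
    (α : ℝ) (hα1 : 1 < α) (hα2 : α < 2)
    (hroot : α ^ k = ∑ i ∈ Finset.range k, α ^ i)
    (n : ℤ) (hn : 1 ≤ n) :
    α ^ (n - 2) ≤ (F n : ℝ) ∧ (F n : ℝ) ≤ α ^ (n - 1) := by
  have hF : IsKBonacci k F := ⟨hF0, hF1, hFrec⟩
  exact ⟨hF.zpow_sub_two_le hα1.le hα2.le hroot n hn,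
    hF.le_zpow_sub_one (by positivity) hroot n (by omega)⟩
end

section
/- Let r ≥ 1 be an integer and let a, T be real numbers such that T > (4r²)^r and T > a/(log a)^r, where a > 1 and log denotes the natural logarithm. Then a < 2^r · T · (log T)^r. -/
lemma log_le_div_e {x : ℝ} (hx : 0 < x) : Real.log x ≤ x / Real.exp 1 := by
  have h := Real.log_le_sub_one_of_pos (show 0 < x / Real.exp 1 by positivity)
  rw [Real.log_div (ne_of_gt hx) (by positivity), Real.log_exp] at h
  linarith

/-- Sánchez–Luca: if `r ≥ 1`, `T > (4r²)^r` and `T > a/(log a)^r` with `a > 1`, then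
`a < 2^r · T · (log T)^r`. -/
theorem sanchez_luca_bound
    (r : ℕ) (hr : 1 ≤ r) (a T : ℝ) (ha : 1 < a)
    (hT1 : (4 * (r : ℝ) ^ 2) ^ r < T)
    (hT2 : a / (Real.log a) ^ r < T) :
    a < 2 ^ r * T * (Real.log T) ^ r := by
  have hr1 : (1 : ℝ) ≤ r := by exact_mod_cast hr
  have ha0 : (0 : ℝ) < a := by linarith
  have hL : 0 < Real.log a := Real.log_pos ha
  have hLr : 0 < (Real.log a) ^ r := pow_pos hL r
  have haT : a < T * (Real.log a) ^ r := (div_lt_iff₀ hLr).mp hT2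
  have hbase : (4 : ℝ) ≤ 4 * (r : ℝ) ^ 2 := by nlinarith
  have hT4 : (4 : ℝ) < T := by
    have h1 : (4 : ℝ) ^ 1 ≤ 4 ^ r := pow_le_pow_right₀ (by norm_num) hr
    have h2 : (4 : ℝ) ^ r ≤ (4 * (r : ℝ) ^ 2) ^ r :=
      pow_le_pow_left₀ (by norm_num) hbase r
    simp at h1; linarith
  have hT0 : (0 : ℝ) < T := by linarith
  have hM : 0 < Real.log T := Real.log_pos (by linarith)
  rcases le_or_gt a (T ^ 2) with hc | hc
  · -- a ≤ T², so log a ≤ 2 log T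
    have hlog : Real.log a ≤ 2 * Real.log T := by
      have := Real.log_le_log ha0 hc
      rwa [Real.log_pow, Nat.cast_ofNat] at this
    have hpow : (Real.log a) ^ r ≤ (2 * Real.log T) ^ r :=
      pow_le_pow_left₀ hL.le hlog r
    calc a < T * (Real.log a) ^ r := haT
      _ ≤ T * (2 * Real.log T) ^ r := by
          exact mul_le_mul_of_nonneg_left hpow hT0.le
      _ = 2 ^ r * T * (Real.log T) ^ r := by rw [mul_pow]; ring
  · -- a > T² : contradiction
    exfalso
    have hrne : (r : ℝ) ≠ 0 := by positivity
    set e := Real.exp 1 with he_def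
    have he2 : (2 : ℝ) ≤ e := by
      have := Real.exp_one_gt_d9; rw [he_def]; linarith
    have he0 : (0 : ℝ) < e := by linarith
    -- T < a^(1/2)
    have hTa : T < a ^ ((2 : ℝ)⁻¹) := by
      have h := Real.rpow_lt_rpow (by positivity) hc (show (0:ℝ) < (2:ℝ)⁻¹ by norm_num)
      calc T = (T ^ 2) ^ ((2:ℝ)⁻¹) := by
              rw [← Real.rpow_natCast T 2, ← Real.rpow_mul hT0.le]; norm_num
        _ < a ^ ((2:ℝ)⁻¹) := h
    -- log a ≤ (4r/e) * a^(1/(4r))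
    have hlog1 : Real.log a ≤ (4 * r / e) * a ^ ((4 * (r:ℝ))⁻¹) := by
      have h1 : Real.log (a ^ ((4 * (r:ℝ))⁻¹)) = (4 * (r:ℝ))⁻¹ * Real.log a :=
        Real.log_rpow ha0 _
      have h2 := log_le_div_e (show (0:ℝ) < a ^ ((4 * (r:ℝ))⁻¹) by positivity)
      rw [h1] at h2
      have h4r : (0 : ℝ) < 4 * (r:ℝ) := by positivity
      rw [inv_mul_le_iff₀ h4r] at h2
      calc Real.log a ≤ 4 * (r:ℝ) * (a ^ ((4 * (r:ℝ))⁻¹) / e) := h2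
        _ = (4 * r / e) * a ^ ((4 * (r:ℝ))⁻¹) := by ring
    -- (log a)^r ≤ (4r/e)^r * a^(1/4)
    have hpow1 : (Real.log a) ^ r ≤ (4 * r / e) ^ r * a ^ ((4:ℝ)⁻¹) := by
      have h := pow_le_pow_left₀ hL.le hlog1 r
      rw [mul_pow] at h
      have h2 : (a ^ ((4 * (r:ℝ))⁻¹)) ^ r = a ^ ((4:ℝ)⁻¹) := by
        rw [← Real.rpow_natCast (a ^ ((4 * (r:ℝ))⁻¹)) r, ← Real.rpow_mul ha0.le]
        congr 1
        field_simp
      rwa [h2] at h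
    -- a^(1/4) < (4r/e)^r
    have hq : a ^ ((4:ℝ)⁻¹) < (4 * r / e) ^ r := by
      have key : a < (4 * r / e) ^ r * a ^ ((3:ℝ)/4) := by
        calc a < T * (Real.log a) ^ r := haT
          _ ≤ T * ((4 * r / e) ^ r * a ^ ((4:ℝ)⁻¹)) :=
              mul_le_mul_of_nonneg_left hpow1 hT0.le
          _ < a ^ ((2:ℝ)⁻¹) * ((4 * r / e) ^ r * a ^ ((4:ℝ)⁻¹)) := by
              apply mul_lt_mul_of_pos_right hTa
              positivity
          _ = (4 * r / e) ^ r * (a ^ ((2:ℝ)⁻¹) * a ^ ((4:ℝ)⁻¹)) := by ring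
          _ = (4 * r / e) ^ r * a ^ ((3:ℝ)/4) := by
              rw [← Real.rpow_add ha0]; norm_num
      have hsplit : a = a ^ ((3:ℝ)/4) * a ^ ((4:ℝ)⁻¹) := by
        rw [← Real.rpow_add ha0]; norm_num
      have h34 : (0:ℝ) < a ^ ((3:ℝ)/4) := by positivity
      nlinarith [key, hsplit]
    -- a < ((4r/e)^4)^r ≤ (16 r^4)^r
    have ha4 : a < ((4 * r / e) ^ r) ^ 4 := by
      have h := pow_lt_pow_left₀ hq (by positivity : (0:ℝ) ≤ a ^ ((4:ℝ)⁻¹)) (n := 4) (by norm_num)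
      have h2 : (a ^ ((4:ℝ)⁻¹)) ^ (4:ℕ) = a := by
        rw [← Real.rpow_natCast (a ^ ((4:ℝ)⁻¹)) 4, ← Real.rpow_mul ha0.le]
        norm_num
      rwa [h2] at h
    have hup : ((4 * r / e) ^ r) ^ 4 ≤ (16 * (r:ℝ)^4) ^ r := by
      rw [← pow_mul, mul_comm r 4, pow_mul]
      apply pow_le_pow_left₀ (by positivity)
      have h1 : 4 * (r:ℝ) / e ≤ 2 * r := by
        rw [div_le_iff₀ he0]; nlinarith
      calc ((4 * r / e) ^ 4 : ℝ) ≤ (2 * r) ^ 4 :=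
            pow_le_pow_left₀ (by positivity) h1 4
        _ = 16 * (r:ℝ)^4 := by ring
    have hlow : (16 * (r:ℝ)^4) ^ r < a := by
      have h1 : ((4 * (r:ℝ)^2) ^ r) ^ 2 < T ^ 2 :=
        pow_lt_pow_left₀ hT1 (by positivity) (by norm_num)
      have h2 : ((4 * (r:ℝ)^2) ^ r) ^ 2 = (16 * (r:ℝ)^4) ^ r := by
        rw [← pow_mul, mul_comm r 2, pow_mul]
        congr 1; ring
      linarith [h1, hc, h2 ▸ h1]
    linarith
end

section
/- Let M be a positive integer, let γ be an irrational real number and let p/q be a convergent of the continued fraction expansion of γ such that q > 6M. Let A, B, μ be real numbers with A > 0 and B > 1, and set ε := ‖μq‖ − M·‖γq‖, where ‖·‖ denotes the distance to the nearest integer. If ε > 0, then there is no solution to the inequality 0 < |uγ − v + μ| < A·B^{−u} in positive integers u, v with u ≤ M and u ≥ log(Aq/ε)/log B. -/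
/-!
Write `Λ = uγ - v + μ`. Since the convergent denominator `q` is an integer, `μq` and
`qΛ - u·γq` differ by an integer, so `‖μq‖ ≤ q|Λ| + u‖γq‖` and hence `q|Λ| ≥ ε` when `u ≤ M`.
Together with `|Λ| < A B^{-u}` this gives `B^u < Aq/ε`, i.e. `u < log(Aq/ε)/log B`.
-/

/-- The distance from a real number to the nearest integer. -/
noncomputable def distNearestInt (x : ℝ) : ℝ := |x - round x|

namespace GenContFract

variable {K : Type*} [Field K] [LinearOrder K] [FloorRing K] {v : K}

theorem exists_int_eq_contsAux_b : ∀ n : ℕ, ∃ z : ℤ, ((GenContFract.of v).contsAux n).b = z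
  | 0 => ⟨0, by simp [contsAux]⟩
  | 1 => ⟨1, by simp [contsAux]⟩
  | n + 2 => by
    obtain ⟨z, hz⟩ := exists_int_eq_contsAux_b n
    obtain ⟨z', hz'⟩ := exists_int_eq_contsAux_b (n + 1)
    cases hs : (GenContFract.of v).s.get? n with
    | none => exact ⟨z', by simp [contsAux, hs, hz']⟩
    | some gp =>
      obtain ⟨ha, b, hb⟩ := of_partNum_eq_one_and_exists_int_partDen_eq hs
      refine ⟨b * z' + z, ?_⟩
      rw [contsAux_recurrence hs rfl rfl, ha, hb, hz, hz']
      push_cast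
      ring

theorem exists_int_eq_nth_den (n : ℕ) : ∃ z : ℤ, (GenContFract.of v).dens n = z := by
  rw [den_eq_conts_b, nth_cont_eq_succ_nth_contAux]
  exact exists_int_eq_contsAux_b (n + 1)

end GenContFract

namespace distNearestInt

theorem le_abs_sub_intCast (x : ℝ) (z : ℤ) : distNearestInt x ≤ |x - z| := round_le x z

theorem add_intCast (x : ℝ) (z : ℤ) : distNearestInt (x + z) = distNearestInt x := by
  simp only [distNearestInt, round_add_intCast, Int.cast_add, add_sub_add_right_eq_sub]

theorem add_le (x y : ℝ) : distNearestInt (x + y) ≤ distNearestInt x + distNearestInt y :=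
  calc distNearestInt (x + y) ≤ |x + y - ↑(round x + round y)| := le_abs_sub_intCast _ _
    _ = |(x - round x) + (y - round y)| := by push_cast; ring_nf
    _ ≤ distNearestInt x + distNearestInt y := abs_add_le _ _

theorem intCast_mul_le (n : ℤ) (x : ℝ) : distNearestInt (n * x) ≤ |n| * distNearestInt x :=
  calc distNearestInt (n * x) ≤ |n * x - ↑(n * round x)| := le_abs_sub_intCast _ _
    _ = |n| * distNearestInt x := by
      rw [distNearestInt, Int.cast_mul, ← mul_sub, abs_mul, Int.cast_abs]

theorem le_abs (x : ℝ) : distNearestInt x ≤ |x| := by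
  simpa using le_abs_sub_intCast x 0

end distNearestInt

theorem distNearestInt_sub_le_abs_mul (γ μ : ℝ) (Q u v : ℤ) :
    distNearestInt (μ * Q) - |u| * distNearestInt (γ * Q) ≤ |Q * (u * γ - v + μ)| := by
  set Λ : ℝ := u * γ - v + μ
  have hμ : μ * Q = (Q * Λ + (-u : ℤ) * (γ * Q)) + ((v * Q : ℤ) : ℝ) := by
    simp only [Λ]; push_cast; ring
  have key : distNearestInt (μ * Q) ≤ |Q * Λ| + |-u| * distNearestInt (γ * Q) :=
    calc distNearestInt (μ * Q) = distNearestInt (Q * Λ + (-u : ℤ) * (γ * Q)) := by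
          rw [hμ, distNearestInt.add_intCast]
      _ ≤ distNearestInt (Q * Λ) + distNearestInt ((-u : ℤ) * (γ * Q)) :=
          distNearestInt.add_le _ _
      _ ≤ |Q * Λ| + |-u| * distNearestInt (γ * Q) :=
          add_le_add (distNearestInt.le_abs _) (distNearestInt.intCast_mul_le _ _)
  rw [abs_neg] at key
  linarith

theorem lt_log_div_log_of_pow_lt {B c : ℝ} (hB : 1 < B) {u : ℕ} (h : B ^ u < c) :
    (u : ℝ) < Real.log c / Real.log B := by
  rw [Real.log_div_log, Real.lt_logb_iff_rpow_lt hB ((pow_pos (by linarith) u).trans h),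
    Real.rpow_natCast]
  exact h

theorem dujella_petho_reduction_general
    (M : ℕ) (γ : ℝ)
    (i : ℕ) (q : ℝ)
    (hq : q = (GenContFract.of γ).dens i)
    (A B μ ε : ℝ) (hB : 1 < B)
    (hε : ε = distNearestInt (μ * q) - (M : ℝ) * distNearestInt (γ * q))
    (hεpos : 0 < ε) :
    ¬ ∃ u v : ℕ, 0 < u ∧ 0 < v ∧
        0 < |(u : ℝ) * γ - (v : ℝ) + μ| ∧
        |(u : ℝ) * γ - (v : ℝ) + μ| < A * B ^ (-(u : ℤ)) ∧
        u ≤ M ∧ Real.log (A * q / ε) / Real.log B ≤ (u : ℝ) := by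
  rintro ⟨u, v, -, -, -, hΛ, huM, hu⟩
  obtain ⟨Q, rfl⟩ : ∃ Q : ℤ, q = Q := hq ▸ GenContFract.exists_int_eq_nth_den i
  have hq0 : (0 : ℝ) ≤ Q := hq ▸ GenContFract.zero_le_of_den
  have hlow : ε ≤ Q * |u * γ - v + μ| := by
    have := distNearestInt_sub_le_abs_mul γ μ Q u v
    have huM' : (u : ℝ) ≤ M := by exact_mod_cast huM
    push_cast at this
    rw [abs_mul, abs_of_nonneg hq0, Nat.abs_cast] at this
    have hdγ : 0 ≤ distNearestInt (γ * Q) := abs_nonneg _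
    nlinarith [mul_le_mul_of_nonneg_right huM' hdγ]
  have hQ : (0 : ℝ) < Q := hq0.lt_of_ne fun h => by rw [← h, zero_mul] at hlow; linarith
  have hpow : B ^ u < A * Q / ε := by
    rw [lt_div_iff₀ hεpos]
    rw [zpow_neg, zpow_natCast] at hΛ
    have hBu : 0 < B ^ u := pow_pos (by linarith) u
    calc B ^ u * ε ≤ B ^ u * (Q * |u * γ - v + μ|) := by gcongr
      _ < B ^ u * (Q * (A * (B ^ u)⁻¹)) := by gcongr
      _ = A * Q := by field_simp
  exact (lt_log_div_log_of_pow_lt hB hpow).not_ge hu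

/-- Dujella–Pethő reduction lemma: let `M` be a positive integer, `p/q` a convergent of
the continued fraction of the irrational `γ` with `q > 6M`, and `A, B, μ` reals with
`A > 0`, `B > 1`. If `ε := ‖μq‖ − M·‖γq‖ > 0`, then there is no solution of
`0 < |uγ − v + μ| < A·B^{−u}` in positive integers `u, v` with `u ≤ M` and
`u ≥ log(Aq/ε)/log B`. -/
theorem dujella_petho_reduction
    (M : ℕ) (hM : 0 < M) (γ : ℝ) (hγ : Irrational γ)
    (i : ℕ) (p q : ℝ)
    (hp : p = (GenContFract.of γ).nums i)
    (hq : q = (GenContFract.of γ).dens i)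
    (hq6 : 6 * (M : ℝ) < q)
    (A B μ ε : ℝ) (hA : 0 < A) (hB : 1 < B)
    (hε : ε = distNearestInt (μ * q) - (M : ℝ) * distNearestInt (γ * q))
    (hεpos : 0 < ε) :
    ¬ ∃ u v : ℕ, 0 < u ∧ 0 < v ∧
        0 < |(u : ℝ) * γ - (v : ℝ) + μ| ∧
        |(u : ℝ) * γ - (v : ℝ) + μ| < A * B ^ (-(u : ℤ)) ∧
        u ≤ M ∧ Real.log (A * q / ε) / Real.log B ≤ (u : ℝ) :=
  dujella_petho_reduction_general M γ i q hq A B μ ε hB hε hεpos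
end

section
/- Let k ≥ 3, m ≥ 3, n ≥ 1 and x ≥ 1 be integers such that (F_{m+1}^{(k)})^x − (F_{m-1}^{(k)})^x = F_n^{(k)}. Let α be the unique real root in (1,2) of Ψ_k(x) = x^k − x^{k−1} − ⋯ − x − 1 and g := (α − 1)/(2 + (k + 1)(α − 2)). Then |g·α^{n−1}·(F_{m+1}^{(k)})^{−x} − 1| < 2/(2.3)^x. -/
/-!
Over `ℂ` the roots of `Ψ_k` are simple and `F_n = ∑_z (z - 1) / ((k + 1) z - 2k) · z^(n-1)` (a
Binet-type formula obtained from Lagrange interpolation). The root `α` contributes exactly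
`g α^(n-1)`; every other root lies in the closed unit disc, where
`|(z - 1) / ((k + 1) z - 2k)| ≤ 2 / (k - 1)`, so the remaining `k - 1` terms give
`|g α^(n-1) - F_n| ≤ 2`. With `A = F_(m+1) ≥ 4`, `B = F_(m-1) ≤ A / 3` and `F_n = A^x - B^x`,
this yields `|g α^(n-1) A^(-x) - 1| ≤ 2 / 4^x + 3^(-x) < 2 / 2.3^x`.
-/

open Finset Polynomial

section PowMulTwoSub

variable {k : ℕ}

lemma hasDerivAt_pow_mul_two_sub (hk : 1 ≤ k) (r : ℝ) :
    HasDerivAt (fun r : ℝ => r ^ k * (2 - r)) (r ^ (k - 1) * (k * (2 - r) - r)) r := by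
  refine ((hasDerivAt_pow k r).mul ((hasDerivAt_id r).const_sub 2)).congr_deriv ?_
  rw [← pow_sub_one_mul (by omega : k ≠ 0) r, id]
  ring

lemma strictMonoOn_pow_mul_two_sub (hk : 1 ≤ k) :
    StrictMonoOn (fun r : ℝ => r ^ k * (2 - r)) (Set.Icc 0 (2 * k / (k + 1))) := by
  refine strictMonoOn_of_deriv_pos (convex_Icc _ _) (by fun_prop) fun r hr => ?_
  rw [interior_Icc, Set.mem_Ioo, lt_div_iff₀ (by positivity)] at hr
  rw [(hasDerivAt_pow_mul_two_sub hk r).deriv]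
  have := pow_pos hr.1 (k - 1)
  nlinarith

lemma strictAntiOn_pow_mul_two_sub (hk : 1 ≤ k) :
    StrictAntiOn (fun r : ℝ => r ^ k * (2 - r)) (Set.Ici (2 * k / (k + 1))) := by
  refine strictAntiOn_of_deriv_neg (convex_Ici _) (by fun_prop) fun r hr => ?_
  rw [interior_Ici, Set.mem_Ioi, div_lt_iff₀ (by positivity)] at hr
  rw [(hasDerivAt_pow_mul_two_sub hk r).deriv]
  have hk' : (1 : ℝ) ≤ k := by exact_mod_cast hk
  have := pow_pos (show 0 < r by nlinarith) (k - 1)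
  nlinarith

lemma one_lt_pow_mul_two_sub (hk : 1 ≤ k) {r : ℝ} (hr : 1 < r) (hr' : r ≤ 2 * k / (k + 1)) :
    1 < r ^ k * (2 - r) := by
  have h := strictMonoOn_pow_mul_two_sub hk ⟨zero_le_one, hr.le.trans hr'⟩ ⟨by linarith, hr'⟩ hr
  norm_num at h
  exact h

lemma eq_of_pow_mul_two_sub_eq_one (hk : 1 ≤ k) {r s : ℝ} (hr : 1 < r) (hs : 1 < s)
    (hr1 : r ^ k * (2 - r) = 1) (hs1 : s ^ k * (2 - s) = 1) : r = s := by
  have lower : ∀ t : ℝ, 1 < t → t ^ k * (2 - t) = 1 → 2 * k / (k + 1) ≤ t := fun t ht ht1 =>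
    le_of_not_ge fun h => (one_lt_pow_mul_two_sub hk ht h).ne' ht1
  exact (strictAntiOn_pow_mul_two_sub hk).injOn (lower r hr hr1) (lower s hs hs1)
    (hr1.trans hs1.symm)

lemma one_lt_two_mul_div (hk : 2 ≤ k) : (1 : ℝ) < 2 * k / (k + 1) := by
  rw [lt_div_iff₀ (by positivity)]
  have : (2 : ℝ) ≤ k := by exact_mod_cast hk
  linarith

end PowMulTwoSub

lemma pow_mul_two_sub_eq_one {R : Type*} [CommRing R] {k : ℕ} {z : R}
    (hz : z ^ k = ∑ i ∈ range k, z ^ i) : z ^ k * (2 - z) = 1 := by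
  linear_combination (1 - z) * hz - geom_sum_mul z k

lemma pow_eq_sum_range_pow_sub {R : Type*} [CommSemiring R] {k t : ℕ} {z : R}
    (hz : z ^ k = ∑ i ∈ range k, z ^ i) (ht : k ≤ t) :
    z ^ t = ∑ j ∈ range k, z ^ (t - 1 - j) := by
  rw [← sum_range_reflect, ← Nat.sub_add_cancel ht, pow_add, hz, mul_sum]
  refine sum_congr rfl fun j hj => ?_
  rw [← pow_add]
  have := mem_range.1 hj
  congr 1
  omega

lemma Complex.eq_norm_of_norm_sub_eq {c : ℝ} (hc : c ≠ 0) {z : ℂ}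
    (h : ‖(c : ℂ) - z‖ = c - ‖z‖) : z = ‖z‖ := by
  have h1 : (c - z.re) ^ 2 + z.im ^ 2 = (c - ‖z‖) ^ 2 := by
    rw [← h, Complex.sq_norm, Complex.normSq_apply]
    simp only [Complex.sub_re, Complex.ofReal_re, Complex.sub_im, Complex.ofReal_im]
    ring
  have h2 : z.re ^ 2 + z.im ^ 2 = ‖z‖ ^ 2 := by
    rw [Complex.sq_norm, Complex.normSq_apply]; ring
  have hre : z.re = ‖z‖ := by
    apply mul_left_cancel₀ hc; nlinarith
  have him : z.im = 0 := pow_eq_zero_iff two_ne_zero |>.1 (by rw [hre] at h2; linarith)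
  exact Complex.ext (by simpa using hre) (by simpa using him)

lemma norm_sub_one_div_le {κ : ℝ} (hκ : 1 < κ) {z : ℂ} (hz : ‖z‖ ≤ 1) :
    ‖(z - 1) / ((κ + 1) * z - 2 * κ)‖ ≤ 2 / (κ - 1) := by
  have hnum : ‖z - 1‖ ≤ 2 := by
    linarith [norm_sub_le z 1, norm_one (α := ℂ)]
  have hden : κ - 1 ≤ ‖(κ + 1) * z - 2 * κ‖ := by
    have h := norm_sub_norm_le (2 * κ : ℂ) ((κ + 1) * z)
    rw [norm_sub_rev] at h
    have h2 : ‖(2 * κ : ℂ)‖ = 2 * κ := by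
      rw [show (2 * κ : ℂ) = ((2 * κ : ℝ) : ℂ) by push_cast; ring, Complex.norm_real,
        Real.norm_of_nonneg (by linarith)]
    have h3 : ‖((κ : ℂ) + 1) * z‖ ≤ κ + 1 := by
      rw [norm_mul, show (κ : ℂ) + 1 = ((κ + 1 : ℝ) : ℂ) by push_cast; ring, Complex.norm_real,
        Real.norm_of_nonneg (by linarith)]
      nlinarith [norm_nonneg z]
    linarith
  rw [norm_div]
  exact div_le_div₀ zero_le_two hnum (by linarith) hden

lemma Lagrange.sum_nodalWeight_mul_pow {K : Type*} [Field K] [DecidableEq K] (s : Finset K)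
    {e : ℕ} (he : e < #s) :
    ∑ z ∈ s, nodalWeight s id z * z ^ e = if e = #s - 1 then 1 else 0 := by
  calc ∑ z ∈ s, nodalWeight s id z * z ^ e
      = ∑ z ∈ s, ((X : K[X]) ^ e).eval (id z) / ∏ u ∈ s.erase z, (id z - id u) := by
        refine sum_congr rfl fun z _ => ?_
        rw [nodalWeight, prod_inv_distrib, eval_pow, eval_X, div_eq_mul_inv, mul_comm, id]
    _ = ((X : K[X]) ^ e).coeff (#s - 1) :=
        (coeff_eq_sum (Set.injOn_id _) (by rw [degree_X_pow]; exact_mod_cast he)).symm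
    _ = if e = #s - 1 then 1 else 0 := by rw [coeff_X_pow]; simp only [eq_comm]

noncomputable def kFibPoly (k : ℕ) : ℂ[X] := X ^ k - ∑ i ∈ range k, X ^ i

lemma degree_sum_X_pow_lt {R : Type*} [Semiring R] (k : ℕ) :
    (∑ i ∈ range k, (X : R[X]) ^ i).degree < k := by
  simpa [Fin.sum_univ_eq_sum_range (fun i => (X : R[X]) ^ i)] using
    degree_sum_fin_lt (R := R) (n := k) (fun _ => 1)

lemma kFibPoly_monic (k : ℕ) : (kFibPoly k).Monic := monic_X_pow_sub (degree_sum_X_pow_lt k)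

lemma natDegree_kFibPoly (k : ℕ) : (kFibPoly k).natDegree = k := by
  refine natDegree_eq_of_degree_eq_some ?_
  rw [kFibPoly, degree_sub_eq_left_of_degree_lt, degree_X_pow]
  simpa using degree_sum_X_pow_lt k

@[simp] lemma eval_kFibPoly (k : ℕ) (z : ℂ) :
    (kFibPoly k).eval z = z ^ k - ∑ i ∈ range k, z ^ i := by
  simp [kFibPoly, eval_finsetSum]

lemma X_sub_one_mul_kFibPoly (k : ℕ) : (X - 1) * kFibPoly k = X ^ (k + 1) - 2 * X ^ k + 1 := by
  have h := geom_sum_mul (X : ℂ[X]) k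
  rw [kFibPoly]
  linear_combination (-1 : ℂ[X]) * h

section Roots

variable {k : ℕ}

lemma eq_of_one_lt_norm (hk : 1 ≤ k) {α : ℝ} (hα : 1 < α) (hαroot : α ^ k = ∑ i ∈ range k, α ^ i)
    {z : ℂ} (hz : z ^ k = ∑ i ∈ range k, z ^ i) (hz1 : 1 < ‖z‖) : z = α := by
  -- `‖z‖ ^ k * (2 - ‖z‖) = 1`, squeezed between `hupper` and `hlower`, forces `‖z‖ = α`;
  -- then equality in `2 - ‖z‖ ≤ ‖2 - z‖` forces `z` to be real.
  have hnorm : ‖z‖ ^ k * ‖2 - z‖ = 1 := by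
    simpa using congrArg norm (pow_mul_two_sub_eq_one hz)
  have hupper : ‖z‖ ^ k * (2 - ‖z‖) ≤ 1 := by
    have : 2 - ‖z‖ ≤ ‖2 - z‖ := by simpa using norm_sub_norm_le (2 : ℂ) z
    rw [← hnorm]; gcongr
  have hlower : 1 ≤ ‖z‖ ^ k * (2 - ‖z‖) := by
    have hsum : ‖z‖ ^ k ≤ ∑ i ∈ range k, ‖z‖ ^ i := by
      simpa [← hz] using norm_sum_le (range k) (fun i => z ^ i)
    have := geom_sum_mul ‖z‖ k
    nlinarith
  have hr : ‖z‖ = α := eq_of_pow_mul_two_sub_eq_one hk hz1 hα (le_antisymm hupper hlower)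
    (pow_mul_two_sub_eq_one hαroot)
  have h2 : ‖(2 : ℝ) - z‖ = 2 - ‖z‖ := by
    have hpos : 0 < ‖z‖ ^ k := by positivity
    push_cast
    exact mul_left_cancel₀ hpos.ne' (hnorm.trans (le_antisymm hupper hlower).symm)
  rw [Complex.eq_norm_of_norm_sub_eq two_ne_zero h2, hr]

lemma sub_one_mul_eval_derivative_kFibPoly (hk : 1 ≤ k) {z : ℂ}
    (hz : z ^ k = ∑ i ∈ range k, z ^ i) :
    (z - 1) * (derivative (kFibPoly k)).eval z = z ^ (k - 1) * ((k + 1) * z - 2 * k) := by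
  have h := congrArg (fun p => (derivative p).eval z) (X_sub_one_mul_kFibPoly k)
  simp only [derivative_mul, derivative_sub, derivative_X, derivative_one, derivative_add,
    derivative_X_pow, derivative_ofNat] at h
  have hroot : (kFibPoly k).eval z = 0 := by rw [eval_kFibPoly, hz, sub_self]
  simp [-eval_kFibPoly, hroot] at h
  rw [← pow_sub_one_mul (by omega : k ≠ 0) z] at h
  linear_combination h

lemma add_one_mul_sub_ne_zero (hk : 2 ≤ k) {z : ℂ} (hz : z ^ k = ∑ i ∈ range k, z ^ i) :
    (k + 1) * z - 2 * k ≠ 0 := by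
  -- `2k / (k + 1)` is where `r ^ k * (2 - r)` peaks, with a value above `1`.
  intro h
  have hz0 : z = ((2 * k / (k + 1) : ℝ) : ℂ) := by
    push_cast
    field_simp
    linear_combination h
  have h1 := pow_mul_two_sub_eq_one hz
  rw [hz0] at h1
  have h2 : (2 * k / (k + 1) : ℝ) ^ k * (2 - 2 * k / (k + 1)) = 1 := by exact_mod_cast h1
  exact (one_lt_pow_mul_two_sub (by omega) (one_lt_two_mul_div hk) le_rfl).ne' h2

lemma eval_derivative_kFibPoly_ne_zero (hk : 2 ≤ k) {z : ℂ} (hz : z ^ k = ∑ i ∈ range k, z ^ i) :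
    (derivative (kFibPoly k)).eval z ≠ 0 := by
  intro h
  have h1 := sub_one_mul_eval_derivative_kFibPoly (by omega) hz
  rw [h, mul_zero, eq_comm, mul_eq_zero] at h1
  rcases h1 with h1 | h1
  · have hz0 : z = 0 := pow_eq_zero_iff (by omega) |>.1 h1
    simpa [hz0, zero_pow (by omega : k ≠ 0)] using pow_mul_two_sub_eq_one hz
  · exact add_one_mul_sub_ne_zero hk hz h1

noncomputable def kFibRoots (k : ℕ) : Finset ℂ := (kFibPoly k).roots.toFinset

lemma mem_kFibRoots {z : ℂ} : z ∈ kFibRoots k ↔ z ^ k = ∑ i ∈ range k, z ^ i := by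
  rw [kFibRoots, Multiset.mem_toFinset, mem_roots (kFibPoly_monic k).ne_zero, IsRoot,
    eval_kFibPoly, sub_eq_zero]

lemma nodup_roots_kFibPoly (hk : 2 ≤ k) : (kFibPoly k).roots.Nodup := by
  classical
  refine Multiset.nodup_iff_count_le_one.2 fun z => ?_
  rw [count_roots, ← not_lt, one_lt_rootMultiplicity_iff_isRoot (kFibPoly_monic k).ne_zero]
  rintro ⟨hz, hz'⟩
  rw [IsRoot, eval_kFibPoly, sub_eq_zero] at hz
  exact eval_derivative_kFibPoly_ne_zero hk hz hz'

lemma card_kFibRoots (hk : 2 ≤ k) : #(kFibRoots k) = k := by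
  rw [kFibRoots, Multiset.toFinset_card_of_nodup (nodup_roots_kFibPoly hk),
    ← (IsAlgClosed.splits _).natDegree_eq_card_roots, natDegree_kFibPoly]

lemma kFibPoly_eq_nodal (hk : 2 ≤ k) : kFibPoly k = Lagrange.nodal (kFibRoots k) id := by
  rw [(IsAlgClosed.splits _).eq_prod_roots_of_monic (kFibPoly_monic k), Lagrange.nodal,
    kFibRoots, prod_eq_multiset_prod, Multiset.toFinset_val,
    Multiset.dedup_eq_self.2 (nodup_roots_kFibPoly hk)]
  rfl

lemma pow_mul_nodalWeight_kFibRoots (hk : 2 ≤ k) {z : ℂ} (hz : z ∈ kFibRoots k) :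
    z ^ (k - 1) * Lagrange.nodalWeight (kFibRoots k) id z = (z - 1) / ((k + 1) * z - 2 * k) := by
  have hroot := mem_kFibRoots.1 hz
  rw [Lagrange.nodalWeight_eq_eval_derivative_nodal hz, id, ← kFibPoly_eq_nodal hk,
    ← div_eq_mul_inv,
    div_eq_div_iff (eval_derivative_kFibPoly_ne_zero hk hroot) (add_one_mul_sub_ne_zero hk hroot),
    sub_one_mul_eval_derivative_kFibPoly (by omega) hroot]

end Roots

structure IsKFibonacci (k : ℕ) (F : ℤ → ℤ) : Prop where
  eq_zero : ∀ i : ℤ, 2 - (k : ℤ) ≤ i → i ≤ 0 → F i = 0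
  apply_one : F 1 = 1
  eq_sum : ∀ i : ℤ, 2 ≤ i → F i = ∑ j ∈ Finset.Icc (1 : ℤ) (k : ℤ), F (i - j)

namespace IsKFibonacci

variable {k : ℕ} {F : ℤ → ℤ} (hF : IsKFibonacci k F)
include hF

lemma eq_sum_range {i : ℤ} (hi : 2 ≤ i) : F i = ∑ j ∈ range k, F (i - 1 - j) := by
  rw [hF.eq_sum i hi]
  refine sum_nbij' (fun j => (j - 1).toNat) (fun j => j + 1) ?_ ?_ ?_ ?_ ?_ <;>
    intro j hj <;> simp at hj ⊢ <;> first | omega | (congr 1; omega)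

lemma nonneg {i : ℤ} (hi : 2 - (k : ℤ) ≤ i) : 0 ≤ F i := by
  induction i using Int.strongRec (m := 2 - k) with
  | lt i hi' => omega
  | ge i _ ih =>
    rcases lt_trichotomy i 1 with h | rfl | h
    · rw [hF.eq_zero i hi (by omega)]
    · rw [hF.apply_one]; norm_num
    · rw [hF.eq_sum_range (by omega)]
      exact sum_nonneg fun j hj => ih _ (by omega) (by rw [mem_range] at hj; omega)

lemma monotoneOn (hk : 1 ≤ k) : MonotoneOn F (Set.Ici (2 - (k : ℤ))) := by
  refine monotoneOn_of_le_add_one Set.ordConnected_Ici fun i _ hi _ => ?_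
  rw [Set.mem_Ici] at hi
  rcases lt_trichotomy i 0 with h | rfl | h
  · rw [hF.eq_zero i hi h.le, hF.eq_zero (i + 1) (by omega) (by omega)]
  · rw [hF.eq_zero 0 hi le_rfl, zero_add, hF.apply_one]; norm_num
  · rw [hF.eq_sum_range (i := i + 1) (by omega)]
    have hterm : ∀ j ∈ range k, 0 ≤ F (i + 1 - 1 - j) := fun j hj =>
      hF.nonneg (by rw [mem_range] at hj; omega)
    simpa using single_le_sum hterm (mem_range.2 hk)

lemma eq_two_mul_sub (hk : 1 ≤ k) {i : ℤ} (hi : 3 ≤ i) :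
    F i = 2 * F (i - 1) - F (i - 1 - k) := by
  obtain ⟨k, rfl⟩ := Nat.exists_eq_add_of_le' hk
  have h1 : F i = F (i - 1) + ∑ j ∈ range k, F (i - 2 - j) := by
    rw [hF.eq_sum_range (by omega), sum_range_succ', add_comm]
    congr 1
    · simp
    · refine sum_congr rfl fun j _ => ?_; push_cast; ring_nf
  have h2 : F (i - 1) = ∑ j ∈ range k, F (i - 2 - j) + F (i - 2 - k) := by
    rw [hF.eq_sum_range (by omega), sum_range_succ]
    ring_nf
  rw [show i - 1 - ((k + 1 : ℕ) : ℤ) = i - 2 - k by push_cast; ring]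
  linarith

lemma apply_two (hk : 1 ≤ k) : F 2 = 1 := by
  rw [hF.eq_sum_range le_rfl, sum_eq_single 0]
  · simpa using hF.apply_one
  · intro j hj hj0
    exact hF.eq_zero _ (by rw [mem_range] at hj; omega) (by omega)
  · exact fun h => absurd (mem_range.2 hk) h

lemma apply_four (hk : 3 ≤ k) : F 4 = 4 := by
  have h3 : F 3 = 2 := by
    rw [hF.eq_two_mul_sub (by omega) le_rfl, hF.eq_zero (3 - 1 - k) (by omega) (by omega)]
    norm_num [hF.apply_two (by omega)]
  rw [hF.eq_two_mul_sub (by omega) (by norm_num), hF.eq_zero (4 - 1 - k) (by omega) (by omega)]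
  norm_num [h3]

lemma three_mul_le (hk : 3 ≤ k) {m : ℤ} (hm : 3 ≤ m) : 3 * F (m - 1) ≤ F (m + 1) := by
  have hconvex : F (m - 1) - F (m - 2) ≤ F m - F (m - 1) := by
    rw [hF.eq_two_mul_sub (by omega) hm]
    have := hF.monotoneOn (by omega) (a := m - 1 - k) (b := m - 2) (Set.mem_Ici.2 (by omega))
      (Set.mem_Ici.2 (by omega)) (by omega)
    linarith
  have hthree : ∑ j ∈ range 3, F (m + 1 - 1 - j) ≤ F (m + 1) := by
    rw [hF.eq_sum_range (by omega)]
    refine sum_le_sum_of_subset_of_nonneg (range_subset_range.2 hk) fun j hj _ => ?_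
    exact hF.nonneg (by rw [mem_range] at hj; omega)
  simp only [sum_range_succ, sum_range_zero] at hthree
  norm_num at hthree
  linarith

lemma cast_eq_sum_nodalWeight_mul_pow {K : Type*} [Field K] [DecidableEq K] {s : Finset K}
    (hs : #s = k) (hroot : ∀ z ∈ s, z ^ k = ∑ i ∈ range k, z ^ i) (t : ℕ) :
    (F (2 - k + t) : K) = ∑ z ∈ s, Lagrange.nodalWeight s id z * z ^ t := by
  induction t using Nat.strong_induction_on with
  | _ t ih =>
    rcases lt_or_ge t k with ht | ht
    · rw [Lagrange.sum_nodalWeight_mul_pow s (hs ▸ ht), hs]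
      split_ifs with h
      · rw [show 2 - (k : ℤ) + t = 1 by omega, hF.apply_one, Int.cast_one]
      · rw [hF.eq_zero _ (by omega) (by omega), Int.cast_zero]
    · rw [hF.eq_sum_range (by omega)]
      push_cast
      calc ∑ j ∈ range k, (F (2 - k + t - 1 - j) : K)
          = ∑ j ∈ range k, ∑ z ∈ s, Lagrange.nodalWeight s id z * z ^ (t - 1 - j) := by
            refine sum_congr rfl fun j hj => ?_
            simp only [mem_range] at hj
            rw [show 2 - (k : ℤ) + t - 1 - j = 2 - k + ((t - 1 - j : ℕ) : ℤ) by omega]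
            exact ih _ (by omega)
        _ = ∑ z ∈ s, Lagrange.nodalWeight s id z * z ^ t := by
            rw [sum_comm]
            refine sum_congr rfl fun z hz => ?_
            rw [← mul_sum, ← pow_eq_sum_range_pow_sub (hroot z hz) ht]

lemma cast_eq_sum_kFibRoots (hk : 2 ≤ k) {n : ℕ} (hn : 1 ≤ n) :
    (F n : ℂ) = ∑ z ∈ kFibRoots k, (z - 1) / ((k + 1) * z - 2 * k) * z ^ (n - 1) := by
  have h := hF.cast_eq_sum_nodalWeight_mul_pow (card_kFibRoots hk)
    (fun z hz => mem_kFibRoots.1 hz) (n + k - 2)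
  rw [show 2 - (k : ℤ) + ((n + k - 2 : ℕ) : ℤ) = n by omega] at h
  rw [h]
  refine sum_congr rfl fun z hz => ?_
  rw [← pow_mul_nodalWeight_kFibRoots hk hz, mul_comm (z ^ (k - 1)), mul_assoc, ← pow_add]
  congr 2
  omega

lemma abs_sub_le_two (hk : 2 ≤ k) {α : ℝ} (hα : 1 < α) (hαroot : α ^ k = ∑ i ∈ range k, α ^ i)
    {n : ℕ} (hn : 1 ≤ n) : |(α - 1) / ((k + 1) * α - 2 * k) * α ^ (n - 1) - F n| ≤ 2 := by
  set c : ℂ → ℂ := fun z => (z - 1) / ((k + 1) * z - 2 * k) * z ^ (n - 1)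
  have hα_mem : (α : ℂ) ∈ kFibRoots k := mem_kFibRoots.2 (by exact_mod_cast hαroot)
  have hsplit : (((α - 1) / ((k + 1) * α - 2 * k) * α ^ (n - 1) - F n : ℝ) : ℂ) =
      -∑ z ∈ (kFibRoots k).erase α, c z := by
    have hbinet := hF.cast_eq_sum_kFibRoots hk hn
    rw [← add_sum_erase _ c hα_mem] at hbinet
    push_cast
    rw [hbinet]
    simp only [c]
    ring
  have hc : ∀ z ∈ (kFibRoots k).erase α, ‖c z‖ ≤ 2 / ((k : ℝ) - 1) := by
    intro z hz
    obtain ⟨hzα, hz⟩ := mem_erase.1 hz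
    have hz1 : ‖z‖ ≤ 1 := le_of_not_gt fun h =>
      hzα (eq_of_one_lt_norm (by omega) hα hαroot (mem_kFibRoots.1 hz) h)
    have hk1 : (1 : ℝ) < k := by exact_mod_cast (by omega : 1 < k)
    have hw := norm_sub_one_div_le hk1 hz1
    push_cast at hw
    calc ‖c z‖ ≤ 2 / ((k : ℝ) - 1) * 1 := by
          rw [norm_mul, norm_pow]
          gcongr
          exact pow_le_one₀ (norm_nonneg z) hz1
      _ = 2 / ((k : ℝ) - 1) := mul_one _
  calc |(α - 1) / ((k + 1) * α - 2 * k) * α ^ (n - 1) - F n|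
      = ‖∑ z ∈ (kFibRoots k).erase α, c z‖ := by
        rw [← norm_neg, ← hsplit, Complex.norm_real, Real.norm_eq_abs]
    _ ≤ ∑ z ∈ (kFibRoots k).erase α, ‖c z‖ := norm_sum_le _ _
    _ ≤ ∑ z ∈ (kFibRoots k).erase α, 2 / ((k : ℝ) - 1) := sum_le_sum hc
    _ = 2 := by
        have hk1 : (k : ℝ) - 1 ≠ 0 := by
          rw [sub_ne_zero]; exact_mod_cast (by omega : k ≠ 1)
        rw [sum_const, card_erase_of_mem hα_mem, card_kFibRoots hk, nsmul_eq_mul,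
          Nat.cast_sub (by omega), Nat.cast_one]
        field_simp

end IsKFibonacci

lemma two_div_four_pow_add_one_div_three_pow_lt {x : ℕ} (hx : 1 ≤ x) :
    2 / 4 ^ x + (1 / 3) ^ x < 2 / (2.3 : ℝ) ^ x := by
  have h4 : (2.3 / 4 : ℝ) ^ x ≤ 2.3 / 4 := pow_le_of_le_one (by norm_num) (by norm_num) (by omega)
  have h3 : (2.3 / 3 : ℝ) ^ x ≤ 2.3 / 3 := pow_le_of_le_one (by norm_num) (by norm_num) (by omega)
  have hsplit : 2 / 4 ^ x + (1 / 3) ^ x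
      = 1 / (2.3 : ℝ) ^ x * (2 * (2.3 / 4) ^ x + (2.3 / 3) ^ x) := by
    rw [div_pow, div_pow, div_pow, one_pow]
    field_simp
  rw [hsplit, show 2 / (2.3 : ℝ) ^ x = 1 / 2.3 ^ x * 2 by ring]
  exact mul_lt_mul_of_pos_left (by linarith) (by positivity)

lemma abs_div_pow_sub_one_lt {y A B : ℝ} {x : ℕ} (hx : 1 ≤ x) (hA : 4 ≤ A) (hB : 0 ≤ B)
    (hBA : 3 * B ≤ A) (hy : |y - (A ^ x - B ^ x)| ≤ 2) : |y / A ^ x - 1| < 2 / 2.3 ^ x := by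
  have hAx : 0 < A ^ x := by positivity
  have hsplit : y / A ^ x - 1 = (y - (A ^ x - B ^ x)) / A ^ x - (B / A) ^ x := by
    rw [div_pow]; field_simp; ring
  have h1 : |y / A ^ x - 1| ≤ 2 / A ^ x + (B / A) ^ x := by
    rw [hsplit]
    refine (abs_sub _ _).trans ?_
    rw [abs_div, abs_of_pos hAx, abs_of_nonneg (pow_nonneg (div_nonneg hB (by linarith)) x)]
    exact add_le_add_left (div_le_div_of_nonneg_right hy hAx.le) _
  have h2 : 2 / A ^ x ≤ 2 / 4 ^ x := by gcongr
  have h3 : (B / A) ^ x ≤ (1 / 3) ^ x := by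
    refine pow_le_pow_left₀ (div_nonneg hB (by linarith)) ?_ x
    rw [div_le_div_iff₀ (by linarith) (by norm_num)]
    linarith
  linarith [two_div_four_pow_add_one_div_three_pow_lt hx]

theorem kFib_linear_form_bound_general
    (k : ℕ) (hk : 3 ≤ k)
    (F : ℤ → ℤ)
    (hF0 : ∀ i : ℤ, 2 - (k : ℤ) ≤ i → i ≤ 0 → F i = 0)
    (hF1 : F 1 = 1)
    (hFrec : ∀ i : ℤ, 2 ≤ i → F i = ∑ j ∈ Finset.Icc (1 : ℤ) (k : ℤ), F (i - j))
    (α : ℝ) (hα1 : 1 < α)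
    (hroot : α ^ k = ∑ i ∈ Finset.range k, α ^ i)
    (g : ℝ) (hg : g = (α - 1) / (2 + ((k : ℝ) + 1) * (α - 2)))
    (m : ℤ) (hm : 3 ≤ m) (n : ℕ) (hn : 1 ≤ n) (x : ℕ) (hx : 1 ≤ x)
    (heq : (F (m + 1)) ^ x - (F (m - 1)) ^ x = F (n : ℤ)) :
    |g * α ^ (n - 1) / ((F (m + 1) : ℝ)) ^ x - 1| < 2 / 2.3 ^ x := by
  have hF : IsKFibonacci k F := ⟨hF0, hF1, hFrec⟩
  have hA : (4 : ℝ) ≤ F (m + 1) := by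
    have := hF.monotoneOn (by omega) (a := 4) (b := m + 1) (Set.mem_Ici.2 (by omega))
      (Set.mem_Ici.2 (by omega)) (by omega)
    exact_mod_cast hF.apply_four hk ▸ this
  have hB : (0 : ℝ) ≤ F (m - 1) := by exact_mod_cast hF.nonneg (by omega)
  have hBA : 3 * (F (m - 1) : ℝ) ≤ F (m + 1) := by exact_mod_cast hF.three_mul_le hk hm
  have hy := hF.abs_sub_le_two (by omega) hα1 hroot hn
  rw [← heq] at hy
  push_cast at hy
  rw [hg, show (2 : ℝ) + (k + 1) * (α - 2) = (k + 1) * α - 2 * k by ring]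
  exact abs_div_pow_sub_one_lt hx hA hB hBA hy

/-- If `k ≥ 3`, `m ≥ 3`, `n ≥ 1`, `x ≥ 1` and `(F_{m+1}^{(k)})^x − (F_{m-1}^{(k)})^x = F_n^{(k)}`,
then `|g·α^{n−1}·(F_{m+1}^{(k)})^{−x} − 1| < 2/(2.3)^x`. -/
theorem kFib_linear_form_bound
    (k : ℕ) (hk : 3 ≤ k)
    (F : ℤ → ℤ)
    (hF0 : ∀ i : ℤ, 2 - (k : ℤ) ≤ i → i ≤ 0 → F i = 0)
    (hF1 : F 1 = 1)
    (hFrec : ∀ i : ℤ, 2 ≤ i → F i = ∑ j ∈ Finset.Icc (1 : ℤ) (k : ℤ), F (i - j))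
    (α : ℝ) (hα1 : 1 < α) (hα2 : α < 2)
    (hroot : α ^ k = ∑ i ∈ Finset.range k, α ^ i)
    (g : ℝ) (hg : g = (α - 1) / (2 + ((k : ℝ) + 1) * (α - 2)))
    (m : ℤ) (hm : 3 ≤ m) (n : ℕ) (hn : 1 ≤ n) (x : ℕ) (hx : 1 ≤ x)
    (heq : (F (m + 1)) ^ x - (F (m - 1)) ^ x = F (n : ℤ)) :
    |g * α ^ (n - 1) / ((F (m + 1) : ℝ)) ^ x - 1| < 2 / 2.3 ^ x :=
  kFib_linear_form_bound_general k hk F hF0 hF1 hFrec α hα1 hroot g hg m hm n hn x hx heq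
end

section
/- Let k ≥ 2 be an integer, α the unique real root in (1,2) of Ψ_k(x) = x^k − x^{k−1} − ⋯ − x − 1, and g := (α − 1)/(2 + (k + 1)(α − 2)). Then for all positive integers m, n, x, one has g·α^{n−1} ≠ (F_{m+1}^{(k)})^x. -/
/-!
Clearing the denominator of `g`, an equation `g α^(n-1) = N` with `N = F_{m+1}^x` a nonzero
integer becomes the integer polynomial relation `(α - 1) α^(n-1) = N ((k+1) α - 2k)`. As a root of
`X^(k+1) - 2X^k + 1`, `α` is a unit algebraic integer of modulus `> 1`, so the product of its
conjugates forces one conjugate `β` with `|β| < 1`, and `β` satisfies the same relation. There the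
left side has modulus at most `1 + |β|` and the right side at least `2k - (k+1)|β|`, which is larger
once `(k+2)|β| < 2k - 1`: automatic for `k ≥ 3`, while for `k = 2` the conjugate is `1 - α`, of
modulus `α - 1 < 3/4`.
-/

open Polynomial

section KFib

variable {k : ℕ} {F : ℤ → ℤ}

theorem kFib_nonneg (hF0 : ∀ i : ℤ, 2 - (k : ℤ) ≤ i → i ≤ 0 → F i = 0) (hF1 : F 1 = 1)
    (hFrec : ∀ i : ℤ, 2 ≤ i → F i = ∑ j ∈ Finset.Icc (1 : ℤ) k, F (i - j))
    (i : ℤ) (hi : 2 - (k : ℤ) ≤ i) : 0 ≤ F i := by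
  suffices ∀ t : ℕ, ∀ i : ℤ, 2 - (k : ℤ) ≤ i → i < 2 - k + t → 0 ≤ F i from
    this (i - (2 - k) + 1).toNat i hi (by omega)
  intro t
  induction t with
  | zero => omega
  | succ t ih =>
    intro i hi hit
    obtain hi0 | rfl | hi2 : i ≤ 0 ∨ i = 1 ∨ 2 ≤ i := by omega
    · exact (hF0 i hi hi0).ge
    · simp [hF1]
    · rw [hFrec i hi2]
      exact Finset.sum_nonneg fun j hj => ih _ (by grind) (by grind)

theorem kFib_one_le (hk : 1 ≤ k) (hF0 : ∀ i : ℤ, 2 - (k : ℤ) ≤ i → i ≤ 0 → F i = 0)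
    (hF1 : F 1 = 1) (hFrec : ∀ i : ℤ, 2 ≤ i → F i = ∑ j ∈ Finset.Icc (1 : ℤ) k, F (i - j))
    (i : ℤ) (hi : 1 ≤ i) : 1 ≤ F i := by
  induction i, hi using Int.leInduction with
  | base => exact hF1.ge
  | succ i hi ih =>
    rw [hFrec (i + 1) (by omega)]
    calc 1 ≤ F (i + 1 - 1) := by simpa using ih
      _ ≤ _ := Finset.single_le_sum (fun j hj => kFib_nonneg hF0 hF1 hFrec _ (by grind))
          (Finset.mem_Icc.mpr ⟨le_rfl, by exact_mod_cast hk⟩)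

end KFib

theorem Polynomial.exists_mem_roots_norm_lt_one {p : ℂ[X]} (hp : p.Monic) (h0 : ‖p.coeff 0‖ ≤ 1)
    {z : ℂ} (hz : z ∈ p.roots) (hz1 : 1 < ‖z‖) : ∃ β ∈ p.roots, ‖β‖ < 1 := by
  by_contra! h
  obtain ⟨rest, hrest⟩ := Multiset.exists_cons_of_mem hz
  have hprod : ‖p.coeff 0‖ = ‖z‖ * (rest.map (‖·‖)).prod := by
    rw [(IsAlgClosed.splits p).coeff_zero_eq_prod_roots_of_monic hp, norm_mul, norm_pow, norm_neg,
      norm_one, one_pow, one_mul, hrest, Multiset.prod_cons, norm_mul]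
    exact congrArg _ (map_multiset_prod (normHom : ℂ →*₀ ℝ) rest)
  have hrest1 : 1 ≤ (rest.map (‖·‖)).prod :=
    Multiset.one_le_prod fun r hr => by
      obtain ⟨β, hβ, rfl⟩ := Multiset.mem_map.mp hr
      exact h β (hrest ▸ Multiset.mem_cons_of_mem hβ)
  nlinarith

theorem exists_conj_norm_lt_one_of_isUnit_coeff_zero {z : ℂ} {P : ℤ[X]} (hP : P.Monic)
    (hP0 : IsUnit (P.coeff 0)) (hPz : aeval z P = 0) (hz : 1 < ‖z‖) :
    ∃ β : ℂ, ‖β‖ < 1 ∧ ∀ p : ℤ[X], aeval z p = 0 → aeval β p = 0 := by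
  have hint : IsIntegral ℤ z := ⟨P, hP, by rwa [← aeval_def]⟩
  have hμ : (minpoly ℤ z).Monic := minpoly.monic hint
  have hroots (β : ℂ) : β ∈ (minpoly ℤ z).aroots ℂ ↔ aeval β (minpoly ℤ z) = 0 :=
    mem_aroots.trans (and_iff_right hμ.ne_zero)
  have hμ0 : IsUnit ((minpoly ℤ z).coeff 0) := by
    obtain ⟨q, hq⟩ := minpoly.isIntegrallyClosed_dvd hint hPz
    exact isUnit_of_mul_isUnit_left (by rwa [← mul_coeff_zero, ← hq])
  have hμ0' : ‖((minpoly ℤ z).map (algebraMap ℤ ℂ)).coeff 0‖ ≤ 1 := by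
    rw [coeff_map, algebraMap_int_eq, eq_intCast, Complex.norm_intCast, ← Int.cast_abs,
      Int.isUnit_iff_abs_eq.mp hμ0, Int.cast_one]
  obtain ⟨β, hβ, hβ1⟩ := exists_mem_roots_norm_lt_one (hμ.map _) hμ0'
    ((hroots z).2 (minpoly.aeval ℤ z)) hz
  exact ⟨β, hβ1, fun p hp => aeval_eq_zero_of_dvd_aeval_eq_zero
    (minpoly.isIntegrallyClosed_dvd hint hp) ((hroots β).1 hβ)⟩

theorem sub_one_mul_pow_ne_intCast_mul {β : ℂ} (k e : ℕ) {N : ℤ} (hN : N ≠ 0) (hβ : ‖β‖ ≤ 1)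
    (hβk : (k + 2) * ‖β‖ < 2 * k - 1) : (β - 1) * β ^ e ≠ N * ((k + 1) * β - 2 * k) := by
  intro h
  have hlhs : ‖(β - 1) * β ^ e‖ ≤ ‖β‖ + 1 := by
    rw [norm_mul, norm_pow, ← mul_one (‖β‖ + 1)]
    exact mul_le_mul (norm_sub_le_of_le le_rfl norm_one.le) (pow_le_one₀ (norm_nonneg _) hβ)
      (by positivity) (by positivity)
  have hN1 : 1 ≤ ‖(N : ℂ)‖ := by
    rw [Complex.norm_intCast, ← Int.cast_abs]
    exact_mod_cast Int.one_le_abs hN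
  have hrhs : 2 * k - (k + 1) * ‖β‖ ≤ ‖(k + 1) * β - 2 * (k : ℂ)‖ := by
    calc 2 * k - (k + 1) * ‖β‖ = ‖2 * (k : ℂ)‖ - ‖(k + 1) * β‖ := by
          rw [norm_mul, norm_mul]; norm_cast
      _ ≤ ‖2 * (k : ℂ) - (k + 1) * β‖ := norm_sub_norm_le _ _
      _ = _ := norm_sub_rev _ _
  have hnorm : ‖(β - 1) * β ^ e‖ = ‖(N : ℂ)‖ * ‖(k + 1) * β - 2 * (k : ℂ)‖ := by
    rw [h, norm_mul]
  nlinarith [norm_nonneg ((k + 1) * β - 2 * (k : ℂ))]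

theorem norm_lt_three_quarters_of_sq_eq_add_one {α : ℝ} {β : ℂ} (hα : α ^ 2 = α + 1)
    (hα1 : 1 < α) (hβ : β ^ 2 = β + 1) (hβ1 : ‖β‖ < 1) : ‖β‖ < 3 / 4 := by
  have hβα : β = (1 - α : ℝ) := by
    have hαC : (α : ℂ) ^ 2 = α + 1 := by exact_mod_cast congrArg Complex.ofReal hα
    have : (β - α) * (β - (1 - α : ℝ)) = 0 := by push_cast; linear_combination hβ - hαC
    refine sub_eq_zero.mp ((mul_eq_zero.mp this).resolve_left fun h => ?_)
    rw [sub_eq_zero.mp h, Complex.norm_real, Real.norm_eq_abs, abs_of_pos (by linarith)] at hβ1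
    linarith
  rw [hβα, Complex.norm_real, Real.norm_eq_abs, abs_of_neg (by linarith)]
  nlinarith

theorem exists_conj_norm_lt_one_of_pow_eq_geom_sum {k : ℕ} {α : ℝ} (hα1 : 1 < α)
    (hroot : α ^ k = ∑ i ∈ Finset.range k, α ^ i) :
    ∃ β : ℂ, ‖β‖ < 1 ∧ ∀ p : ℤ[X], aeval α p = 0 → aeval β p = 0 := by
  have hreal (p : ℤ[X]) (hp : aeval α p = 0) : aeval (α : ℂ) p = 0 := by
    rw [← Complex.coe_algebraMap, aeval_algebraMap_apply, hp, map_zero]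
  have hαP : α ^ (k + 1) - 2 * α ^ k + 1 = 0 := by
    linear_combination (α - 1) * hroot + geom_sum_mul α k
  obtain ⟨β, hβ1, hconj⟩ := exists_conj_norm_lt_one_of_isUnit_coeff_zero
    (P := X ^ (k + 1) - 2 * X ^ k + 1) (by monicity!)
    (by rcases k with _ | k <;> simp [coeff_X_pow])
    (hreal _ (by simpa [map_ofNat] using hαP)) (by simpa [abs_of_pos (by linarith : 0 < α)])
  exact ⟨β, hβ1, fun p hp => hconj p (hreal p hp)⟩

theorem kFib_linear_form_nonzero_general
    (k : ℕ) (hk : 2 ≤ k)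
    (F : ℤ → ℤ)
    (hF0 : ∀ i : ℤ, 2 - (k : ℤ) ≤ i → i ≤ 0 → F i = 0)
    (hF1 : F 1 = 1)
    (hFrec : ∀ i : ℤ, 2 ≤ i → F i = ∑ j ∈ Finset.Icc (1 : ℤ) (k : ℤ), F (i - j))
    (α : ℝ) (hα1 : 1 < α)
    (hroot : α ^ k = ∑ i ∈ Finset.range k, α ^ i)
    (g : ℝ) (hg : g = (α - 1) / (2 + ((k : ℝ) + 1) * (α - 2)))
    (m : ℤ) (hm : 0 < m) (n x : ℕ) :
    g * α ^ (n - 1) ≠ ((F (m + 1) : ℝ)) ^ x := by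
  intro h
  set N : ℤ := F (m + 1) ^ x
  have hN : N ≠ 0 :=
    pow_ne_zero _ (zero_lt_one.trans_le (kFib_one_le (by omega) hF0 hF1 hFrec _ (by omega))).ne'
  have hαN : (α - 1) * α ^ (n - 1) = N * ((k + 1) * α - 2 * k) := by
    have hD : 2 + ((k : ℝ) + 1) * (α - 2) ≠ 0 := by
      rintro hD
      rw [hg, hD, div_zero, zero_mul] at h
      exact hN (by exact_mod_cast h.symm)
    rw [hg, div_mul_eq_mul_div, div_eq_iff hD] at h
    push_cast [N]
    linear_combination h
  obtain ⟨β, hβ1, hconj⟩ := exists_conj_norm_lt_one_of_pow_eq_geom_sum hα1 hroot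
  have hβN : (β - 1) * β ^ (n - 1) = N * ((k + 1) * β - 2 * k) := by
    have := hconj ((X - 1) * X ^ (n - 1) - C N * ((k + 1 : ℤ[X]) * X - 2 * (k : ℤ[X])))
      (by simpa [sub_eq_zero, map_ofNat] using hαN)
    simpa [sub_eq_zero, map_ofNat] using this
  have hβk : (k + 2) * ‖β‖ < 2 * k - 1 := by
    obtain rfl | hk3 := hk.eq_or_lt
    · have hα2 : α ^ 2 = α + 1 := by simpa [Finset.sum_range_succ, add_comm] using hroot
      have hβ2 : β ^ 2 = β + 1 := by
        have := hconj (X ^ 2 - X - 1) (by simp [hα2])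
        linear_combination (by simpa using this : β ^ 2 - β - 1 = 0)
      have := norm_lt_three_quarters_of_sq_eq_add_one hα2 hα1 hβ2 hβ1
      push_cast
      linarith
    · have : (3 : ℝ) ≤ k := by exact_mod_cast hk3
      nlinarith [norm_nonneg β]
  exact sub_one_mul_pow_ne_intCast_mul k (n - 1) hN hβ1.le hβk hβN

/-- With `α` the dominant root and `g = (α−1)/(2+(k+1)(α−2))`, for all positive integers
`m, n, x` one has `g·α^{n−1} ≠ (F_{m+1}^{(k)})^x`. -/
theorem kFib_linear_form_nonzero
    (k : ℕ) (hk : 2 ≤ k)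
    (F : ℤ → ℤ)
    (hF0 : ∀ i : ℤ, 2 - (k : ℤ) ≤ i → i ≤ 0 → F i = 0)
    (hF1 : F 1 = 1)
    (hFrec : ∀ i : ℤ, 2 ≤ i → F i = ∑ j ∈ Finset.Icc (1 : ℤ) (k : ℤ), F (i - j))
    (α : ℝ) (hα1 : 1 < α) (hα2 : α < 2)
    (hroot : α ^ k = ∑ i ∈ Finset.range k, α ^ i)
    (g : ℝ) (hg : g = (α - 1) / (2 + ((k : ℝ) + 1) * (α - 2)))
    (m : ℤ) (hm : 0 < m) (n x : ℕ) (hn : 1 ≤ n) (hx : 1 ≤ x) :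
    g * α ^ (n - 1) ≠ ((F (m + 1) : ℝ)) ^ x :=
  kFib_linear_form_nonzero_general k hk F hF0 hF1 hFrec α hα1 hroot g hg m hm n x
end
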